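/- Exactness of the Clopper–Pearson interval: for every integer n ≥ 1, every α ∈ (0,1), and every p ∈ (0,1), ∑_{X : p_L(X,α) ≤ p ≤ p_U(X,α)} C(n,X) p^X (1-p)^{n-X} ≥ 1 − α, i.e. the coverage probability of the level-(1-α) Clopper–Pearson interval is at least 1 − α for every p. -/

import Mathlib

open MeasureTheory

/-- The Beta function `β(r,s) = ∫₀¹ t^(r-1) (1-t)^(s-1) dt`. -/
noncomputable def betaFun (r s : ℝ) : ℝ :=
  ∫ t in (0:ℝ)..1, t ^ (r - 1) * (1 - t) ^ (s - 1)

/-- The Beta(r,s) density `f(t;r,s) = t^(r-1)(1-t)^(s-1)/β(r,s)`. -/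
noncomputable def betaPDF (r s t : ℝ) : ℝ :=
  t ^ (r - 1) * (1 - t) ^ (s - 1) / betaFun r s

/-- The Beta(r,s) cumulative distribution function `∫₀ᵖ f(t;r,s) dt`. -/
noncomputable def betaCDF (r s p : ℝ) : ℝ :=
  ∫ t in (0:ℝ)..p, betaPDF r s t

/- The Beta quantile `B(q;r,s)`: the (unique, for `r,s>0`, `q∈(0,1)`) `t ∈ (0,1)`
with `∫₀ᵗ f(u;r,s) du = q`. -/
open Classical in
noncomputable def betaQuantile (r s q : ℝ) : ℝ :=
  if h : ∃ t, t ∈ Set.Ioo (0:ℝ) 1 ∧ betaCDF r s t = q then h.choose else 0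

/-- Lower Clopper–Pearson endpoint: `p_L(X,α) = B(α/2; X, n-X+1)` for `X ≥ 1`,
and `p_L(0,α) = 0`. -/
noncomputable def cpLower (n X : ℕ) (α : ℝ) : ℝ :=
  if X = 0 then 0 else betaQuantile (X : ℝ) ((n : ℝ) - X + 1) (α / 2)

/-- Upper Clopper–Pearson endpoint: `p_U(X,α) = B(1-α/2; X+1, n-X)` for `X ≤ n-1`,
and `p_U(n,α) = 1`. -/
noncomputable def cpUpper (n X : ℕ) (α : ℝ) : ℝ :=
  if X = n then 1 else betaQuantile ((X : ℝ) + 1) ((n : ℝ) - X) (1 - α / 2)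

/-- The binomial probability `b(X;n,p) = C(n,X) p^X (1-p)^(n-X)`. -/
noncomputable def binomPMF (n X : ℕ) (p : ℝ) : ℝ :=
  (n.choose X : ℝ) * p ^ X * (1 - p) ^ (n - X)

/-! Let `X₀` be the smallest `X` with `p < p_L(X)`. All such `X` are `≥ X₀`, so together they have
probability at most the binomial tail `P(Bin(n,p) ≥ X₀)`. Since the derivative of this tail in `p`
telescopes to `n · b(X₀-1; n-1, p)`, the tail is the Beta(`X₀`, `n-X₀+1`) distribution function:
it is increasing in `p` and equals `α/2` at `p_L(X₀)`, so it is at most `α/2` at `p < p_L(X₀)`.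
Symmetrically, with `X₁` the largest `X` with `p_U(X) < p`, the outcomes above the interval have
probability at most `P(Bin(n,p) ≤ X₁) ≤ α/2`. No monotonicity of the endpoints in `X` is needed. -/

open Finset

noncomputable def binomTail (n x : ℕ) (p : ℝ) : ℝ :=
  ∑ k ∈ Icc x n, binomPMF n k p

open Polynomial in
lemma binomPMF_eq_eval_bernsteinPolynomial (n k : ℕ) (p : ℝ) :
    binomPMF n k p = (bernsteinPolynomial ℝ n k).eval p := by
  simp [binomPMF, bernsteinPolynomial]

lemma binomPMF_nonneg (n k : ℕ) {p : ℝ} (hp0 : 0 ≤ p) (hp1 : p ≤ 1) : 0 ≤ binomPMF n k p := by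
  have : 0 ≤ 1 - p := sub_nonneg.mpr hp1
  unfold binomPMF
  positivity

lemma continuous_binomPMF (n k : ℕ) : Continuous (binomPMF n k) := by
  unfold binomPMF
  fun_prop

lemma continuous_binomTail (n x : ℕ) : Continuous (binomTail n x) :=
  continuous_finsetSum _ fun k _ => continuous_binomPMF n k

open Polynomial in
lemma sum_binomPMF (n : ℕ) (p : ℝ) : ∑ k ∈ range (n + 1), binomPMF n k p = 1 := by
  simpa [binomPMF_eq_eval_bernsteinPolynomial, eval_finsetSum] using
    congrArg (eval p) (bernsteinPolynomial.sum ℝ n)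

lemma sum_range_add_binomTail {n x : ℕ} (hx : x ≤ n + 1) (p : ℝ) :
    ∑ k ∈ range x, binomPMF n k p + binomTail n x p = 1 := by
  rw [binomTail, ← Ico_add_one_right_eq_Icc, sum_range_add_sum_Ico _ hx, sum_binomPMF]

lemma binomTail_zero {n x : ℕ} (hx : 0 < x) : binomTail n x 0 = 0 :=
  sum_eq_zero fun k hk => by
    simp [binomPMF, zero_pow (show k ≠ 0 by grind)]

lemma binomTail_one {n x : ℕ} (hxn : x ≤ n) : binomTail n x 1 = 1 := by
  rw [binomTail, sum_eq_single_of_mem n (mem_Icc.mpr ⟨hxn, le_rfl⟩)]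
  · simp [binomPMF]
  · intro k hk hkn
    simp [binomPMF, zero_pow (show n - k ≠ 0 by grind)]

open Polynomial in
lemma hasDerivAt_binomPMF_succ (n k : ℕ) (p : ℝ) :
    HasDerivAt (binomPMF n (k + 1))
      (n * (binomPMF (n - 1) k p - binomPMF (n - 1) (k + 1) p)) p := by
  rw [show binomPMF n (k + 1) = fun p => (bernsteinPolynomial ℝ n (k + 1)).eval p from
    funext (binomPMF_eq_eval_bernsteinPolynomial n (k + 1))]
  simpa [binomPMF_eq_eval_bernsteinPolynomial, bernsteinPolynomial.derivative_succ] using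
    (bernsteinPolynomial ℝ n (k + 1)).hasDerivAt p

lemma hasDerivAt_binomTail {n x : ℕ} (hx : 0 < x) (hxn : x ≤ n) (p : ℝ) :
    HasDerivAt (binomTail n x) (n * binomPMF (n - 1) (x - 1) p) p := by
  obtain ⟨j, rfl⟩ := Nat.exists_eq_add_one_of_ne_zero hx.ne'
  rw [Nat.add_sub_cancel]
  have htail : binomTail n (j + 1) = fun p => ∑ i ∈ Ico j n, binomPMF n (i + 1) p := by
    ext p
    rw [binomTail, sum_Ico_add' (fun k => binomPMF n k p), Ico_add_one_right_eq_Icc]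
  have hvanish : binomPMF (n - 1) n p = 0 := by
    simp [binomPMF, Nat.choose_eq_zero_of_lt (show n - 1 < n by omega)]
  have htelescope := sum_Ico_sub (fun i => binomPMF (n - 1) i p) (Nat.le_of_succ_le hxn)
  rw [htail]
  refine (HasDerivAt.fun_sum fun i _ => hasDerivAt_binomPMF_succ n i p).congr_deriv ?_
  rw [sum_sub_distrib, hvanish] at htelescope
  rw [← mul_sum, sum_sub_distrib]
  linear_combination (-(n : ℝ)) * htelescope

lemma binomTail_eq_integral {n x : ℕ} (hx : 0 < x) (hxn : x ≤ n) (u : ℝ) :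
    binomTail n x u = ∫ t in (0 : ℝ)..u, n * binomPMF (n - 1) (x - 1) t := by
  rw [intervalIntegral.integral_eq_sub_of_hasDerivAt
    (fun t _ => hasDerivAt_binomTail hx hxn t)
    ((continuous_const.mul (continuous_binomPMF _ _)).intervalIntegrable _ _),
    binomTail_zero hx, sub_zero]

lemma monotoneOn_binomTail {n x : ℕ} (hx : 0 < x) (hxn : x ≤ n) :
    MonotoneOn (binomTail n x) (Set.Icc 0 1) := by
  refine monotoneOn_of_hasDerivWithinAt_nonneg (convex_Icc 0 1)
    (continuous_binomTail n x).continuousOn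
    (fun t _ => (hasDerivAt_binomTail hx hxn t).hasDerivWithinAt) fun t ht => ?_
  rw [interior_Icc] at ht
  exact mul_nonneg n.cast_nonneg (binomPMF_nonneg _ _ ht.1.le ht.2.le)

lemma betaCDF_natCast_eq_binomTail {n x : ℕ} (hx : 0 < x) (hxn : x ≤ n) (u : ℝ) :
    betaCDF x (n - x + 1) u = binomTail n x u := by
  set c : ℝ := n * (n - 1).choose (x - 1)
  have hc : c ≠ 0 := by
    have := Nat.choose_pos (show x - 1 ≤ n - 1 by omega)
    have : (0 : ℝ) < n := by exact_mod_cast hx.trans_le hxn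
    positivity
  have hweight (t : ℝ) :
      t ^ ((x : ℝ) - 1) * (1 - t) ^ ((n : ℝ) - x + 1 - 1) = n * binomPMF (n - 1) (x - 1) t / c := by
    rw [show (x : ℝ) - 1 = ((x - 1 : ℕ) : ℝ) by rw [Nat.cast_sub hx]; simp,
      show (n : ℝ) - x + 1 - 1 = ((n - 1 - (x - 1) : ℕ) : ℝ) by
        rw [show n - 1 - (x - 1) = n - x by omega, Nat.cast_sub hxn]; ring,
      Real.rpow_natCast, Real.rpow_natCast, binomPMF]
    field_simp
    ring
  have hintegral (u : ℝ) : ∫ t in (0 : ℝ)..u, t ^ ((x : ℝ) - 1) * (1 - t) ^ ((n : ℝ) - x + 1 - 1)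
      = binomTail n x u / c := by
    simp_rw [hweight]
    rw [intervalIntegral.integral_div, binomTail_eq_integral hx hxn]
  have hbeta : betaFun x (n - x + 1) = 1 / c := by
    rw [betaFun, hintegral, binomTail_one hxn]
  rw [betaCDF]
  simp only [betaPDF, intervalIntegral.integral_div, hintegral, hbeta]
  field_simp

lemma binomTail_betaQuantile {n x : ℕ} (hx : 0 < x) (hxn : x ≤ n) {q : ℝ}
    (hq : q ∈ Set.Ioo 0 1) :
    betaQuantile x (n - x + 1) q ∈ Set.Ioo 0 1 ∧
      binomTail n x (betaQuantile x (n - x + 1) q) = q := by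
  obtain ⟨t, ht, htq⟩ := intermediate_value_Ioo zero_le_one (continuous_binomTail n x).continuousOn
    (by rwa [binomTail_zero hx, binomTail_one hxn])
  have hex : ∃ t, t ∈ Set.Ioo (0 : ℝ) 1 ∧ betaCDF x (n - x + 1) t = q :=
    ⟨t, ht, by rwa [betaCDF_natCast_eq_binomTail hx hxn]⟩
  rw [betaQuantile, dif_pos hex, ← betaCDF_natCast_eq_binomTail hx hxn]
  exact hex.choose_spec

section NoncoverageBounds

variable {n : ℕ} {α p : ℝ}

lemma sum_binomPMF_lt_cpLower_le (hα : α ∈ Set.Ioo 0 1) (hp : p ∈ Set.Ioo 0 1) :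
    ∑ X ∈ range (n + 1) with p < cpLower n X α, binomPMF n X p ≤ α / 2 := by
  set S := {X ∈ range (n + 1) | p < cpLower n X α}
  rcases S.eq_empty_or_nonempty with hS | hS
  · rw [hS, sum_empty]
    linarith [hα.1]
  obtain ⟨hX₀n, hX₀p⟩ := mem_filter.mp (S.min'_mem hS)
  set X₀ := S.min' hS
  have hX₀ : 0 < X₀ := by
    refine Nat.pos_of_ne_zero fun h => ?_
    rw [h, cpLower, if_pos rfl] at hX₀p
    linarith [hp.1]
  replace hX₀n : X₀ ≤ n := Nat.lt_succ_iff.mp (mem_range.mp hX₀n)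
  rw [cpLower, if_neg hX₀.ne'] at hX₀p
  obtain ⟨ht, htq⟩ := binomTail_betaQuantile hX₀ hX₀n (q := α / 2)
    ⟨by linarith [hα.1], by linarith [hα.2]⟩
  calc ∑ X ∈ S, binomPMF n X p ≤ binomTail n X₀ p :=
        sum_le_sum_of_subset_of_nonneg
          (fun X hX => mem_Icc.mpr ⟨S.min'_le X hX,
            Nat.lt_succ_iff.mp (mem_range.mp (mem_filter.mp hX).1)⟩)
          fun X _ _ => binomPMF_nonneg n X hp.1.le hp.2.le
    _ ≤ binomTail n X₀ (betaQuantile X₀ (n - X₀ + 1) (α / 2)) :=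
        monotoneOn_binomTail hX₀ hX₀n ⟨hp.1.le, hp.2.le⟩ ⟨ht.1.le, ht.2.le⟩ hX₀p.le
    _ = α / 2 := htq

lemma sum_binomPMF_cpUpper_lt_le (hα : α ∈ Set.Ioo 0 1) (hp : p ∈ Set.Ioo 0 1) :
    ∑ X ∈ range (n + 1) with cpUpper n X α < p, binomPMF n X p ≤ α / 2 := by
  set S := {X ∈ range (n + 1) | cpUpper n X α < p}
  rcases S.eq_empty_or_nonempty with hS | hS
  · rw [hS, sum_empty]
    linarith [hα.1]
  obtain ⟨hX₁n, hX₁p⟩ := mem_filter.mp (S.max'_mem hS)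
  set X₁ := S.max' hS
  have hX₁ : X₁ + 1 ≤ n := by
    refine lt_of_le_of_ne (Nat.lt_succ_iff.mp (mem_range.mp hX₁n)) fun h => ?_
    rw [h, cpUpper, if_pos rfl] at hX₁p
    linarith [hp.2]
  rw [cpUpper, if_neg (by omega), show (X₁ : ℝ) + 1 = ((X₁ + 1 : ℕ) : ℝ) by push_cast; ring,
    show (n : ℝ) - X₁ = n - ((X₁ + 1 : ℕ) : ℝ) + 1 by push_cast; ring] at hX₁p
  obtain ⟨ht, htq⟩ := binomTail_betaQuantile X₁.succ_pos hX₁ (q := 1 - α / 2)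
    ⟨by linarith [hα.2], by linarith [hα.1]⟩
  have hsplit := sum_range_add_binomTail (n := n) (show X₁ + 1 ≤ n + 1 by omega) p
  calc ∑ X ∈ S, binomPMF n X p ≤ ∑ X ∈ range (X₁ + 1), binomPMF n X p :=
        sum_le_sum_of_subset_of_nonneg
          (fun X hX => mem_range.mpr (Nat.lt_succ_of_le (S.le_max' X hX)))
          fun X _ _ => binomPMF_nonneg n X hp.1.le hp.2.le
    _ = 1 - binomTail n (X₁ + 1) p := by linarith
    _ ≤ 1 - binomTail n (X₁ + 1)
          (betaQuantile (X₁ + 1 : ℕ) (n - (X₁ + 1 : ℕ) + 1) (1 - α / 2)) :=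
        sub_le_sub_left (monotoneOn_binomTail X₁.succ_pos hX₁ ⟨ht.1.le, ht.2.le⟩
          ⟨hp.1.le, hp.2.le⟩ hX₁p.le) 1
    _ = α / 2 := by rw [htq]; ring

end NoncoverageBounds

open Classical in
theorem clopperPearson_coverage_general (n : ℕ) (α : ℝ) (hα : α ∈ Set.Ioo (0:ℝ) 1)
    (p : ℝ) (hp : p ∈ Set.Ioo (0:ℝ) 1) :
    1 - α ≤ ∑ X ∈ Finset.range (n + 1),
      (if cpLower n X α ≤ p ∧ p ≤ cpUpper n X α then binomPMF n X p else 0) := by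
  have hcover (X : ℕ) : binomPMF n X p - (if p < cpLower n X α then binomPMF n X p else 0)
      - (if cpUpper n X α < p then binomPMF n X p else 0)
      ≤ if cpLower n X α ≤ p ∧ p ≤ cpUpper n X α then binomPMF n X p else 0 := by
    have := binomPMF_nonneg n X hp.1.le hp.2.le
    split_ifs <;> grind
  calc 1 - α ≤ (∑ X ∈ range (n + 1), binomPMF n X p)
        - (∑ X ∈ range (n + 1) with p < cpLower n X α, binomPMF n X p)
        - ∑ X ∈ range (n + 1) with cpUpper n X α < p, binomPMF n X p := by
        rw [sum_binomPMF]
        linarith [sum_binomPMF_lt_cpLower_le (n := n) hα hp,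
          sum_binomPMF_cpUpper_lt_le (n := n) hα hp]
    _ ≤ _ := by
        rw [sum_filter, sum_filter, ← sum_sub_distrib, ← sum_sub_distrib]
        exact sum_le_sum fun X _ => hcover X

open Classical in
/-- Exactness of the Clopper–Pearson interval: its coverage probability is at least `1 - α`
for every `p ∈ (0,1)`. -/
theorem clopperPearson_coverage (n : ℕ) (hn : 1 ≤ n) (α : ℝ) (hα : α ∈ Set.Ioo (0:ℝ) 1)
    (p : ℝ) (hp : p ∈ Set.Ioo (0:ℝ) 1) :
    1 - α ≤ ∑ X ∈ Finset.range (n + 1),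
      (if cpLower n X α ≤ p ∧ p ≤ cpUpper n X α then binomPMF n X p else 0) :=
  clopperPearson_coverage_general n α hα p hp
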